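/- Let C ⊆ ℝ^m be a cone with vertex at the origin (t·x ∈ C whenever x ∈ C, t ≥ 0), and suppose there exists λ ≥ 1 such that d_C(v,w) ≤ λ‖v-w‖ for all unit vectors v, w ∈ C. Then d_C(x,y) ≤ (1+λ)‖x-y‖ for all x, y ∈ C, i.e., C is Lipschitz normally embedded. -/

import Mathlib

open Set Filter Metric

/-- Length of a path `γ : [0,1] → E` measured via the (extended) variation. -/
noncomputable def pathLength {E : Type*} [NormedAddCommGroup E] (γ : ℝ → E) : ENNReal :=
  eVariationOn γ (Set.Icc 0 1)

/-- `γ` is a path in `X` from `x` to `y`, parametrized on `[0,1]`. -/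
def IsPathIn {E : Type*} [NormedAddCommGroup E] (X : Set E) (x y : E) (γ : ℝ → E) : Prop :=
  ContinuousOn γ (Set.Icc 0 1) ∧ Set.MapsTo γ (Set.Icc 0 1) X ∧ γ 0 = x ∧ γ 1 = y

/-- The inner (length) distance on `X`: the infimum of the lengths of paths in `X`
joining `x` to `y`. -/
noncomputable def innerDist {E : Type*} [NormedAddCommGroup E] (X : Set E) (x y : E) : ENNReal :=
  ⨅ γ ∈ {γ : ℝ → E | IsPathIn X x y γ}, pathLength γ

/-!
Write `x = a • u` and `y = b • v` with `u`, `v` unit vectors of the cone and `m = min a b`.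
Go radially from `x` to `m • u`, then along `m` times a path from `u` to `v` (dilation scales
lengths by `m`), then radially to `y`. The radial legs have total length `|a - b| ≤ ‖x - y‖`,
and the middle one length at most `λ m ‖u - v‖ ≤ λ ‖x - y‖`: in an inner product space the
radial retraction onto the ball of radius `m` is `1`-Lipschitz.
-/

open scoped NNReal

section Concat

variable {α : Type*}

noncomputable def pathConcat (γ₁ γ₂ : ℝ → α) (t : ℝ) : α :=
  if t ≤ 1 / 2 then γ₁ (2 * t) else γ₂ (2 * t - 1)

lemma pathConcat_eqOn_left {γ₁ γ₂ : ℝ → α} : EqOn (pathConcat γ₁ γ₂) (γ₁ ∘ (2 * ·)) (Iic (1 / 2)) :=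
  fun _ ht => if_pos ht

lemma pathConcat_eqOn_right {γ₁ γ₂ : ℝ → α} (h : γ₁ 1 = γ₂ 0) :
    EqOn (pathConcat γ₁ γ₂) (γ₂ ∘ (2 * · - 1)) (Ici (1 / 2)) := by
  intro t ht
  rcases (mem_Ici.1 ht).eq_or_lt with rfl | hlt
  · norm_num [pathConcat, h]
  · exact if_neg (not_le.2 hlt)

lemma mapsTo_two_mul_Icc : MapsTo (2 * · : ℝ → ℝ) (Icc 0 (1 / 2)) (Icc 0 1) :=
  fun t ht => ⟨by linarith [ht.1], by linarith [ht.2]⟩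

lemma mapsTo_two_mul_sub_one_Icc : MapsTo (2 * · - 1 : ℝ → ℝ) (Icc (1 / 2) 1) (Icc 0 1) :=
  fun t ht => ⟨by linarith [ht.1], by linarith [ht.2]⟩

end Concat

section Paths

variable {E : Type*} [NormedAddCommGroup E] {X : Set E} {x y z : E} {γ γ₁ γ₂ : ℝ → E}

lemma innerDist_le_pathLength (h : IsPathIn X x y γ) : innerDist X x y ≤ pathLength γ :=
  iInf₂_le γ h

lemma pathLength_le_of_lipschitzOnWith {K : ℝ≥0} (h : LipschitzOnWith K γ (Icc 0 1)) :
    pathLength γ ≤ K := by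
  calc pathLength γ = eVariationOn (γ ∘ id) (Icc 0 1) := rfl
    _ ≤ K * eVariationOn id (Icc 0 1) := h.comp_eVariationOn_le (mapsTo_id _)
    _ = K := by simp

lemma IsPathIn.concat (h₁ : IsPathIn X x z γ₁) (h₂ : IsPathIn X z y γ₂) :
    IsPathIn X x y (pathConcat γ₁ γ₂) := by
  obtain ⟨hc₁, hm₁, rfl, h₁1⟩ := h₁
  obtain ⟨hc₂, hm₂, h₂0, rfl⟩ := h₂
  have hjoin : γ₁ 1 = γ₂ 0 := h₁1.trans h₂0.symm
  have hleft : ContinuousOn (pathConcat γ₁ γ₂) (Icc 0 (1 / 2)) :=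
    (hc₁.comp (by fun_prop) mapsTo_two_mul_Icc).congr
      (pathConcat_eqOn_left.mono Icc_subset_Iic_self)
  have hright : ContinuousOn (pathConcat γ₁ γ₂) (Icc (1 / 2) 1) :=
    (hc₂.comp (by fun_prop) mapsTo_two_mul_sub_one_Icc).congr
      ((pathConcat_eqOn_right hjoin).mono Icc_subset_Ici_self)
  refine ⟨?_, ?_, by norm_num [pathConcat], by norm_num [pathConcat]⟩
  · rw [← Icc_union_Icc_eq_Icc (by norm_num : (0 : ℝ) ≤ 1 / 2) (by norm_num)]
    exact hleft.union_of_isClosed hright isClosed_Icc isClosed_Icc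
  · intro t ht
    rcases le_total t (1 / 2) with h | h
    · rw [pathConcat_eqOn_left h]
      exact hm₁ (mapsTo_two_mul_Icc ⟨ht.1, h⟩)
    · rw [pathConcat_eqOn_right hjoin h]
      exact hm₂ (mapsTo_two_mul_sub_one_Icc ⟨h, ht.2⟩)

lemma pathLength_concat_le (h : γ₁ 1 = γ₂ 0) :
    pathLength (pathConcat γ₁ γ₂) ≤ pathLength γ₁ + pathLength γ₂ := by
  have hsplit := eVariationOn.Icc_add_Icc (pathConcat γ₁ γ₂) (s := univ)
    (by norm_num : (0 : ℝ) ≤ 1 / 2) (by norm_num : (1 / 2 : ℝ) ≤ 1) (mem_univ _)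
  simp only [univ_inter] at hsplit
  rw [pathLength, ← hsplit]
  gcongr
  · rw [eVariationOn.eq_of_eqOn (pathConcat_eqOn_left.mono Icc_subset_Iic_self)]
    exact eVariationOn.comp_le_of_monotoneOn _ _
      (fun s _ t _ hst => by linarith) mapsTo_two_mul_Icc
  · rw [eVariationOn.eq_of_eqOn ((pathConcat_eqOn_right h).mono Icc_subset_Ici_self)]
    exact eVariationOn.comp_le_of_monotoneOn _ _
      (fun s _ t _ hst => by linarith) mapsTo_two_mul_sub_one_Icc

lemma innerDist_triangle (X : Set E) (x z y : E) :
    innerDist X x y ≤ innerDist X x z + innerDist X z y := by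
  simp only [innerDist, ENNReal.iInf_add, ENNReal.add_iInf]
  refine le_iInf₂ fun γ₂ h₂ => le_iInf₂ fun γ₁ h₁ => ?_
  exact (innerDist_le_pathLength (h₁.concat h₂)).trans
    (pathLength_concat_le (h₁.2.2.2.trans h₂.2.2.1.symm))

end Paths

section Cones

variable {E : Type*} [NormedAddCommGroup E] [NormedSpace ℝ E] {X C : Set E} {x y u v : E}

lemma innerDist_le_of_segment_subset (h : segment ℝ x y ⊆ X) :
    innerDist X x y ≤ ENNReal.ofReal ‖x - y‖ := by
  have hpath : IsPathIn X x y (AffineMap.lineMap x y) :=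
    ⟨AffineMap.lineMap_continuous.continuousOn,
      fun t ht => h (segment_eq_image_lineMap ℝ x y ▸ mem_image_of_mem _ ht),
      AffineMap.lineMap_apply_zero x y, AffineMap.lineMap_apply_one x y⟩
  calc innerDist X x y ≤ nndist x y :=
        (innerDist_le_pathLength hpath).trans
          (pathLength_le_of_lipschitzOnWith (lipschitzWith_lineMap x y).lipschitzOnWith)
    _ = ENNReal.ofReal ‖x - y‖ := by rw [← edist_nndist, edist_dist, dist_eq_norm]

lemma segment_smul_smul_subset_of_cone (hC : ∀ x ∈ C, ∀ t : ℝ, 0 ≤ t → t • x ∈ C) (hu : u ∈ C)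
    {a b : ℝ} (ha : 0 ≤ a) (hb : 0 ≤ b) : segment ℝ (a • u) (b • u) ⊆ C := by
  rintro _ ⟨s, t, hs, ht, -, rfl⟩
  rw [smul_smul, smul_smul, ← add_smul]
  exact hC u hu _ (by positivity)

lemma innerDist_smul_smul_le_of_cone (hC : ∀ x ∈ C, ∀ t : ℝ, 0 ≤ t → t • x ∈ C) (hu : u ∈ C)
    {a b : ℝ} (ha : 0 ≤ a) (hb : 0 ≤ b) :
    innerDist C (a • u) (b • u) ≤ ENNReal.ofReal (|a - b| * ‖u‖) := by
  simpa only [← sub_smul, norm_smul, Real.norm_eq_abs] using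
    innerDist_le_of_segment_subset (segment_smul_smul_subset_of_cone hC hu ha hb)

lemma innerDist_smul_le_of_cone (hC : ∀ x ∈ C, ∀ t : ℝ, 0 ≤ t → t • x ∈ C) {r : ℝ} (hr : 0 < r)
    (x y : E) : innerDist C (r • x) (r • y) ≤ ENNReal.ofReal r * innerDist C x y := by
  have hr₀ : ENNReal.ofReal r ≠ 0 := ENNReal.ofReal_pos.2 hr |>.ne'
  simp only [innerDist, ENNReal.mul_iInf_of_ne hr₀ ENNReal.ofReal_ne_top]
  refine le_iInf₂ fun γ ⟨hc, hm, h0, h1⟩ => ?_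
  have hpath : IsPathIn C (r • x) (r • y) (r • γ) :=
    ⟨hc.const_smul r, fun t ht => hC _ (hm ht) r hr.le, by simp [h0], by simp [h1]⟩
  calc innerDist C (r • x) (r • y) ≤ pathLength (r • γ) := innerDist_le_pathLength hpath
    _ ≤ ‖r‖₊ * pathLength γ :=
        (lipschitzWith_smul r).lipschitzOnWith.comp_eVariationOn_le (mapsTo_univ γ _)
    _ = ENNReal.ofReal r * pathLength γ := by rw [← Real.enorm_eq_ofReal hr.le]; rfl

lemma innerDist_smul_smul_le_add_min_mul (hC : ∀ x ∈ C, ∀ t : ℝ, 0 ≤ t → t • x ∈ C) (hu : u ∈ C)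
    (hv : v ∈ C) (hnu : ‖u‖ = 1) (hnv : ‖v‖ = 1) {a b : ℝ} (ha : 0 < a) (hb : 0 < b) :
    innerDist C (a • u) (b • v) ≤
      ENNReal.ofReal |a - b| + ENNReal.ofReal (min a b) * innerDist C u v := by
  have hdist : (a - min a b) + (b - min a b) = |a - b| := by
    linarith [max_sub_min_eq_abs' a b, min_add_max a b]
  set m := min a b
  have hm : 0 < m := lt_min ha hb
  have ham : 0 ≤ a - m := sub_nonneg.2 (min_le_left a b)
  have hbm : 0 ≤ b - m := sub_nonneg.2 (min_le_right a b)
  calc innerDist C (a • u) (b • v)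
      ≤ innerDist C (a • u) (m • u) + innerDist C (m • u) (m • v) + innerDist C (m • v) (b • v) :=
        (innerDist_triangle C _ (m • v) _).trans (by gcongr; exact innerDist_triangle C _ _ _)
    _ ≤ ENNReal.ofReal (a - m) + ENNReal.ofReal m * innerDist C u v + ENNReal.ofReal (b - m) := by
        gcongr
        · simpa [hnu, abs_of_nonneg ham] using
            innerDist_smul_smul_le_of_cone hC hu ha.le hm.le
        · exact innerDist_smul_le_of_cone hC hm u v
        · simpa [hnv, abs_sub_comm m, abs_of_nonneg hbm] using
            innerDist_smul_smul_le_of_cone hC hv hm.le hb.le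
    _ = ENNReal.ofReal |a - b| + ENNReal.ofReal m * innerDist C u v := by
        rw [add_right_comm, ← ENNReal.ofReal_add ham hbm, hdist]

end Cones

lemma min_mul_norm_sub_le_norm_smul_sub_smul {F : Type*} [NormedAddCommGroup F]
    [InnerProductSpace ℝ F] {u v : F} (hu : ‖u‖ = 1) (hv : ‖v‖ = 1) {a b : ℝ} (ha : 0 ≤ a)
    (hb : 0 ≤ b) : min a b * ‖u - v‖ ≤ ‖a • u - b • v‖ := by
  have hm : 0 ≤ min a b := le_min ha hb
  have hinner : inner ℝ u v ≤ 1 := by simpa [hu, hv] using real_inner_le_norm u v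
  have hprod : min a b * min a b ≤ a * b :=
    mul_le_mul (min_le_left a b) (min_le_right a b) hm ha
  refine (pow_le_pow_iff_left₀ (by positivity) (norm_nonneg _) two_ne_zero).1 ?_
  rw [mul_pow, norm_sub_sq_real, norm_sub_sq_real, norm_smul, norm_smul, real_inner_smul_left,
    real_inner_smul_right, hu, hv, Real.norm_of_nonneg ha, Real.norm_of_nonneg hb]
  nlinarith [mul_le_mul_of_nonneg_right hprod (sub_nonneg.2 hinner), sq_nonneg (a - b)]

theorem innerDist_le_one_add_mul_of_cone {E : Type*} [NormedAddCommGroup E]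
    [InnerProductSpace ℝ E]
    {C : Set E} (hC : ∀ x ∈ C, ∀ t : ℝ, 0 ≤ t → t • x ∈ C) {lam : ℝ} (hlam : 0 ≤ lam)
    (hunit : ∀ v ∈ C, ∀ w ∈ C, ‖v‖ = 1 → ‖w‖ = 1 →
      innerDist C v w ≤ ENNReal.ofReal (lam * ‖v - w‖))
    {x y : E} (hx : x ∈ C) (hy : y ∈ C) :
    innerDist C x y ≤ ENNReal.ofReal ((1 + lam) * ‖x - y‖) := by
  have of_segment (h : segment ℝ x y ⊆ C) :
      innerDist C x y ≤ ENNReal.ofReal ((1 + lam) * ‖x - y‖) :=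
    (innerDist_le_of_segment_subset h).trans <|
      ENNReal.ofReal_le_ofReal (le_mul_of_one_le_left (norm_nonneg _) (by linarith))
  rcases eq_or_ne x 0 with rfl | hx0
  · exact of_segment (by simpa using segment_smul_smul_subset_of_cone hC hy le_rfl zero_le_one)
  rcases eq_or_ne y 0 with rfl | hy0
  · exact of_segment (by simpa using segment_smul_smul_subset_of_cone hC hx zero_le_one le_rfl)
  set u := ‖x‖⁻¹ • x
  set v := ‖y‖⁻¹ • y
  have hnu : ‖u‖ = 1 := norm_smul_inv_norm hx0
  have hnv : ‖v‖ = 1 := norm_smul_inv_norm hy0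
  have hxu : ‖x‖ • u = x := smul_inv_smul₀ (norm_ne_zero_iff.2 hx0) x
  have hyv : ‖y‖ • v = y := smul_inv_smul₀ (norm_ne_zero_iff.2 hy0) y
  have hangular : min ‖x‖ ‖y‖ * ‖u - v‖ ≤ ‖x - y‖ := by
    simpa only [hxu, hyv] using
      min_mul_norm_sub_le_norm_smul_sub_smul hnu hnv (norm_nonneg x) (norm_nonneg y)
  have hu : u ∈ C := hC x hx _ (by positivity)
  have hv : v ∈ C := hC y hy _ (by positivity)
  have hmiddle : ENNReal.ofReal (min ‖x‖ ‖y‖) * innerDist C u v ≤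
      ENNReal.ofReal (lam * ‖x - y‖) :=
    calc ENNReal.ofReal (min ‖x‖ ‖y‖) * innerDist C u v
        ≤ ENNReal.ofReal (min ‖x‖ ‖y‖) * ENNReal.ofReal (lam * ‖u - v‖) := by
          gcongr
          exact hunit u hu v hv hnu hnv
      _ = ENNReal.ofReal (lam * (min ‖x‖ ‖y‖ * ‖u - v‖)) := by
          rw [← ENNReal.ofReal_mul (by positivity)]
          ring_nf
      _ ≤ ENNReal.ofReal (lam * ‖x - y‖) := by gcongr
  calc innerDist C x y = innerDist C (‖x‖ • u) (‖y‖ • v) := by rw [hxu, hyv]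
    _ ≤ ENNReal.ofReal |‖x‖ - ‖y‖| + ENNReal.ofReal (min ‖x‖ ‖y‖) * innerDist C u v :=
        innerDist_smul_smul_le_add_min_mul hC hu hv hnu hnv (norm_pos_iff.2 hx0)
          (norm_pos_iff.2 hy0)
    _ ≤ ENNReal.ofReal ‖x - y‖ + ENNReal.ofReal (lam * ‖x - y‖) := by
        gcongr
        exact abs_norm_sub_norm_le x y
    _ = ENNReal.ofReal ((1 + lam) * ‖x - y‖) := by
        rw [← ENNReal.ofReal_add (norm_nonneg _) (by positivity)]
        ring_nf

theorem stmt7 {m : ℕ} (C : Set (EuclideanSpace ℝ (Fin m)))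
    (hcone : ∀ x ∈ C, ∀ t : ℝ, 0 ≤ t → t • x ∈ C)
    (lam : ℝ) (hlam : 1 ≤ lam)
    (hunit : ∀ v ∈ C, ∀ w ∈ C, ‖v‖ = 1 → ‖w‖ = 1 →
      innerDist C v w ≤ ENNReal.ofReal (lam * ‖v - w‖)) :
    ∀ x ∈ C, ∀ y ∈ C, innerDist C x y ≤ ENNReal.ofReal ((1 + lam) * ‖x - y‖) :=
  fun _ hx _ hy => innerDist_le_one_add_mul_of_cone hcone (by linarith) hunit hx hy
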